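/- For every (u1,…,u5) ∈ ℝ^5 and every α ∈ ℝ: the vectors Z1,…,Z5 are linearly independent (so dim W = 5), the radical W ∩ W⊥ equals span{Z1, Z2}, and ḡ(Z5, Z5) = 1. (This verifies that the submanifold of Example 4 is a 2-lightlike submanifold.) -/

import Mathlib

noncomputable section

/-- The semi-Euclidean metric of signature `(+,+,−,−,+,+,−,−,+,+)` on `ℝ¹⁰`. -/
def gbar : LinearMap.BilinForm ℝ (Fin 10 → ℝ) :=
  LinearMap.mk₂ ℝ
    (fun x y => x 0 * y 0 + x 1 * y 1 - x 2 * y 2 - x 3 * y 3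
      + x 4 * y 4 + x 5 * y 5 - x 6 * y 6 - x 7 * y 7 + x 8 * y 8 + x 9 * y 9)
    (fun _ _ _ => by simp only [Pi.add_apply]; ring)
    (fun _ _ _ => by simp only [Pi.smul_apply, smul_eq_mul]; ring)
    (fun _ _ _ => by simp only [Pi.add_apply]; ring)
    (fun _ _ _ => by simp only [Pi.smul_apply, smul_eq_mul]; ring)

/-- The standard complex structure on `ℝ¹⁰`:
`J(x₁,…,x₁₀) = (−x₂,x₁,−x₄,x₃,−x₆,x₅,−x₈,x₇,−x₁₀,x₉)`. -/
def Jmap (x : Fin 10 → ℝ) : Fin 10 → ℝ :=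
  ![-(x 1), x 0, -(x 3), x 2, -(x 5), x 4, -(x 7), x 6, -(x 9), x 8]

/-- The parametrization of the submanifold of Example 4 (with parameter `α`). -/
def Φ (α : ℝ) (u : Fin 5 → ℝ) : Fin 10 → ℝ :=
  ![u 0 * Real.cosh α,
    Real.exp (u 1) * Real.sinh α + (u 2 + u 3 / 2) * Real.cosh α,
    u 0 * Real.sinh α,
    Real.exp (u 1) * Real.cosh α + (u 2 + u 3 / 2) * Real.sinh α,
    0,
    Real.exp (u 1),
    u 0,
    u 2 - u 3 / 2,
    -Real.cos (u 4),
    Real.sin (u 4)]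

/-- The coordinate tangent vectors `Z_i = ∂Φ/∂u_i`. -/
def Z (α : ℝ) (u : Fin 5 → ℝ) (i : Fin 5) : Fin 10 → ℝ :=
  fderiv ℝ (Φ α) u (Pi.single i 1)

/-!
`Φ α` is a sum of functions of one coordinate each, so `Zᵢ` is the derivative of the `i`-th
summand: `Z₁, Z₃, Z₄` are constant, `Z₂ = e^{u₂} (0, sinh α, 0, cosh α, 0, 1, 0, 0, 0, 0)` and
`Z₅ = (0, …, 0, sin u₅, cos u₅)`. Because `cosh² α - sinh² α = 1`, the Gram matrix of
`Z₁, …, Z₅` is `0 ⊕ 0 ⊕ [[0, 1, 0], [1, 0, 0], [0, 0, 1]]`: `Z₁, Z₂` are null and orthogonal to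
all of `W`, and the Gram matrix is nondegenerate on `Z₃, Z₄, Z₅`, so the radical of `W` is
`span {Z₁, Z₂}`. Linear independence is read off the coordinates `2, 6, 7, 8, 9, 10`.

Lean indices start at `0`: `Z α u 0` is `Z₁` and `u 4` is `u₅`.
-/

open Real

theorem fderiv_sum_apply_apply_single {𝕜 ι E : Type*} [NontriviallyNormedField 𝕜]
    [Fintype ι] [DecidableEq ι] [NormedAddCommGroup E] [NormedSpace 𝕜 E]
    {φ : ι → 𝕜 → E} {u : ι → 𝕜} (hφ : ∀ k, DifferentiableAt 𝕜 (φ k) (u k)) (i : ι) :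
    fderiv 𝕜 (fun v : ι → 𝕜 => ∑ k, φ k (v k)) u (Pi.single i 1) = deriv (φ i) (u i) := by
  have hsum : HasFDerivAt (fun v : ι → 𝕜 => ∑ k, φ k (v k))
      (∑ k, (fderiv 𝕜 (φ k) (u k)).comp (ContinuousLinearMap.proj k)) u :=
    HasFDerivAt.fun_sum fun k _ => (hφ k).hasFDerivAt.comp u (hasFDerivAt_apply k u)
  rw [hsum.fderiv]
  simp [Pi.single_apply]

def Φterm (α : ℝ) : Fin 5 → ℝ → Fin 10 → ℝ :=
  ![fun t => t • ![cosh α, 0, sinh α, 0, 0, 0, 1, 0, 0, 0],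
    fun t => exp t • ![0, sinh α, 0, cosh α, 0, 1, 0, 0, 0, 0],
    fun t => t • ![0, cosh α, 0, sinh α, 0, 0, 0, 1, 0, 0],
    fun t => t • ![0, cosh α / 2, 0, sinh α / 2, 0, 0, 0, -1 / 2, 0, 0],
    fun t => ![0, 0, 0, 0, 0, 0, 0, 0, -cos t, sin t]]

def tangentFrame (α : ℝ) (u : Fin 5 → ℝ) : Fin 5 → Fin 10 → ℝ :=
  ![![cosh α, 0, sinh α, 0, 0, 0, 1, 0, 0, 0],
    ![0, exp (u 1) * sinh α, 0, exp (u 1) * cosh α, 0, exp (u 1), 0, 0, 0, 0],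
    ![0, cosh α, 0, sinh α, 0, 0, 0, 1, 0, 0],
    ![0, cosh α / 2, 0, sinh α / 2, 0, 0, 0, -1 / 2, 0, 0],
    ![0, 0, 0, 0, 0, 0, 0, 0, sin (u 4), cos (u 4)]]

theorem Φ_eq_sum_Φterm (α : ℝ) : Φ α = fun v => ∑ k, Φterm α k (v k) := by
  ext v j
  fin_cases j <;>
    simp only [Φ, Φterm, Fin.sum_univ_five, Finset.sum_apply, Matrix.smul_cons, smul_eq_mul,
      Matrix.smul_empty, Matrix.cons_val', Matrix.cons_val_fin_one, Matrix.cons_val,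
      Matrix.cons_val_zero, Matrix.cons_val_one, Fin.isValue, Fin.reduceFinMk, Fin.zero_eta,
      Fin.mk_one, mul_zero, mul_one, zero_add, add_zero] <;>
    ring

theorem hasDerivAt_Φterm (α : ℝ) (u : Fin 5 → ℝ) :
    ∀ k, HasDerivAt (Φterm α k) (tangentFrame α u k) (u k)
  | 0 | 2 | 3 => ((hasDerivAt_id _).smul_const _).congr_deriv (one_smul ℝ _)
  | 1 => ((hasDerivAt_exp _).smul_const _).congr_deriv <| by
      ext j; fin_cases j <;> simp [tangentFrame]
  | 4 => by
      rw [hasDerivAt_pi]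
      intro j
      fin_cases j <;>
        simp only [Φterm, tangentFrame, Matrix.cons_val, Matrix.cons_val_zero, Matrix.cons_val_one,
          Fin.isValue, Fin.reduceFinMk, Fin.zero_eta, Fin.mk_one]
      all_goals first
        | exact hasDerivAt_const _ _
        | exact (hasDerivAt_cos _).fun_neg.congr_deriv (neg_neg _)
        | exact hasDerivAt_sin _

theorem Z_eq_tangentFrame (α : ℝ) (u : Fin 5 → ℝ) : Z α u = tangentFrame α u := by
  ext1 k
  rw [Z, Φ_eq_sum_Φterm, fderiv_sum_apply_apply_single
    (fun k => (hasDerivAt_Φterm α u k).differentiableAt), (hasDerivAt_Φterm α u k).deriv]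

def tangentGram : Matrix (Fin 5) (Fin 5) ℝ :=
  !![0, 0, 0, 0, 0; 0, 0, 0, 0, 0; 0, 0, 0, 1, 0; 0, 0, 1, 0, 0; 0, 0, 0, 0, 1]

theorem gbar_tangentFrame (α : ℝ) (u : Fin 5 → ℝ) (i j : Fin 5) :
    gbar (tangentFrame α u i) (tangentFrame α u j) = tangentGram i j := by
  have hα := cosh_sq α
  have hu := sin_sq_add_cos_sq (u 4)
  fin_cases i <;> fin_cases j <;>
    simp only [gbar, LinearMap.mk₂_apply, tangentFrame, tangentGram, Matrix.of_apply,
      Matrix.cons_val, Matrix.cons_val_zero, Matrix.cons_val_one, Matrix.cons_val',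
      Matrix.cons_val_fin_one, Fin.isValue, Fin.reduceFinMk, Fin.zero_eta, Fin.mk_one] <;>
    grind

theorem linearIndependent_tangentFrame (α : ℝ) (u : Fin 5 → ℝ) :
    LinearIndependent ℝ (tangentFrame α u) := by
  rw [Fintype.linearIndependent_iff]
  intro c hc
  have hcoord (j : Fin 10) : ∑ i, c i * tangentFrame α u i j = 0 := by
    simpa using congrFun hc j
  have h1 := hcoord 1
  have h5 := hcoord 5
  have h6 := hcoord 6
  have h7 := hcoord 7
  have h8 := hcoord 8
  have h9 := hcoord 9
  simp only [tangentFrame, Fin.sum_univ_five, Fin.isValue, Matrix.cons_val', Matrix.cons_val,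
    Matrix.cons_val_zero, Matrix.cons_val_one, Matrix.cons_val_fin_one, mul_zero, mul_one, zero_add,
    add_zero, mul_eq_zero, exp_ne_zero, or_false] at h1 h5 h6 h7 h8 h9
  have h23 : c 2 + c 3 / 2 = 0 :=
    (mul_eq_zero.1 (by linear_combination h1 - rexp (u 1) * sinh α * h5)).resolve_right
      (cosh_pos α).ne'
  have h4 : c 4 = 0 := by
    by_contra h
    simpa [h8.resolve_left h, h9.resolve_left h] using sin_sq_add_cos_sq (u 4)
  intro i
  fin_cases i <;> simp only [Fin.zero_eta, Fin.mk_one, Fin.isValue, Fin.reduceFinMk] <;> linarith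

theorem LinearMap.BilinForm.mem_orthogonal_span_range_iff {R M ι : Type*} [CommSemiring R]
    [AddCommMonoid M] [Module R M] {B : LinearMap.BilinForm R M} {v : ι → M} {x : M} :
    x ∈ B.orthogonal (Submodule.span R (Set.range v)) ↔ ∀ i, B (v i) x = 0 := by
  change Submodule.span R (Set.range v) ≤ LinearMap.ker (B.flip x) ↔ _
  rw [Submodule.span_le, Set.range_subset_iff]
  rfl

theorem gbar_tangentFrame_sum (α : ℝ) (u : Fin 5 → ℝ) (k : Fin 5) (c : Fin 5 → ℝ) :
    gbar (tangentFrame α u k) (∑ i, c i • tangentFrame α u i) = ∑ i, c i * tangentGram k i := by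
  simp [gbar_tangentFrame]

theorem span_inf_orthogonal_tangentFrame (α : ℝ) (u : Fin 5 → ℝ) :
    Submodule.span ℝ (Set.range (tangentFrame α u)) ⊓
        gbar.orthogonal (Submodule.span ℝ (Set.range (tangentFrame α u)))
      = Submodule.span ℝ {tangentFrame α u 0, tangentFrame α u 1} := by
  apply le_antisymm
  · intro x hx
    obtain ⟨hx, hperp⟩ := Submodule.mem_inf.1 hx
    obtain ⟨c, rfl⟩ := (Submodule.mem_span_range_iff_exists_fun ℝ).1 hx
    rw [LinearMap.BilinForm.mem_orthogonal_span_range_iff] at hperp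
    have hc (k : Fin 5) : ∑ i, c i * tangentGram k i = 0 := by
      rw [← gbar_tangentFrame_sum, hperp]
    have hc2 := hc 2
    have hc3 := hc 3
    have hc4 := hc 4
    simp only [tangentGram, Fin.sum_univ_five, Fin.isValue, Matrix.of_apply, Matrix.cons_val',
      Matrix.cons_val, Matrix.cons_val_zero, Matrix.cons_val_one, Matrix.cons_val_fin_one, mul_zero,
      mul_one, zero_add, add_zero] at hc2 hc3 hc4
    exact Submodule.mem_span_pair.2 ⟨c 0, c 1, by simp [Fin.sum_univ_five, hc2, hc3, hc4]⟩
  · rw [Submodule.span_le, Set.insert_subset_iff, Set.singleton_subset_iff]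
    refine ⟨⟨Submodule.subset_span ⟨0, rfl⟩, ?_⟩, Submodule.subset_span ⟨1, rfl⟩, ?_⟩ <;>
      refine LinearMap.BilinForm.mem_orthogonal_span_range_iff.2 fun i => ?_ <;>
      fin_cases i <;> simp [gbar_tangentFrame, tangentGram]

theorem example4_is_two_lightlike (α : ℝ) (u : Fin 5 → ℝ) :
    LinearIndependent ℝ (Z α u) ∧
    Module.finrank ℝ (Submodule.span ℝ (Set.range (Z α u))) = 5 ∧
    Submodule.span ℝ (Set.range (Z α u)) ⊓
        LinearMap.BilinForm.orthogonal gbar (Submodule.span ℝ (Set.range (Z α u)))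
      = Submodule.span ℝ {Z α u 0, Z α u 1} ∧
    gbar (Z α u 4) (Z α u 4) = 1 := by
  rw [Z_eq_tangentFrame]
  have hli := linearIndependent_tangentFrame α u
  exact ⟨hli, by rw [finrank_span_eq_card hli, Fintype.card_fin],
    span_inf_orthogonal_tangentFrame α u, gbar_tangentFrame α u 4 4⟩
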